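/- Let G be a compact or complex reductive matrix Lie group with Ad-invariant nondegenerate symmetric bilinear form (·,·) on 𝔤 = Tr-pairing. On G×G define ω_{(g,a)} = ½[(Ad_a pr₁*θᴸ, pr₁*θᴸ) + (pr₁*θᴸ, pr₂*(θᴸ+θᴸ∘Ad))]. Then at a unit point (e,a), for tangent vectors u = (ξ, ρᴸ(a)) and v = (η, ϱᴸ(a)) with ξ, η in the centralizer Lie algebra 𝔤_a, the value of ω is (ξ,ϱ) − (η,ρ). In particular ω vanishes on pairs of vertical vectors (ρ = ϱ = 0 case yields (ξ,0)−(η,0)=0 when both horizontal parts vanish). -/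
import Mathlib


open Matrix

/-- At a unit point `(e,a)` of the AMM 2-form
`ω = ½[(Ad_a pr₁*θᴸ, pr₁*θᴸ) + (pr₁*θᴸ, pr₂*(θᴸ+θᴿ))]` on `G × G`,
for tangent vectors `u = (ξ, ρᴸ(a))`, `v = (η, ϱᴸ(a))` with `ξ, η ∈ 𝔤_a`,
the value of `ω` is `(ξ,ϱ) − (η,ρ)` (trace pairing).  In particular it
vanishes on pairs of vertical vectors (`ρ = ϱ = 0`). -/
theorem amm_form_at_unit (n : ℕ)
    (a ξ η ρ ϱ : Matrix (Fin (n+1)) (Fin (n+1)) ℂ) (ha : IsUnit a)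
    (hξ : ξ * a = a * ξ) (hη : η * a = a * η) :
    (1/2 : ℂ) * ((a * ξ * a⁻¹ * η).trace - (a * η * a⁻¹ * ξ).trace
        + (ξ * (ϱ + a * ϱ * a⁻¹)).trace - (η * (ρ + a * ρ * a⁻¹)).trace)
      = (ξ * ϱ).trace - (η * ρ).trace ∧
    (1/2 : ℂ) * ((a * ξ * a⁻¹ * η).trace - (a * η * a⁻¹ * ξ).trace
        + (ξ * ((0 : Matrix (Fin (n+1)) (Fin (n+1)) ℂ)
            + a * 0 * a⁻¹)).trace
        - (η * ((0 : Matrix (Fin (n+1)) (Fin (n+1)) ℂ) + a * 0 * a⁻¹)).trace)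
      = 0 := by
  have hdet : IsUnit a.det := (Matrix.isUnit_iff_isUnit_det a).mp ha
  have hinv : a * a⁻¹ = 1 := Matrix.mul_nonsing_inv a hdet
  have hξ' : a * ξ * a⁻¹ = ξ := by
    rw [← hξ, mul_assoc, hinv, mul_one]
  have hη' : a * η * a⁻¹ = η := by
    rw [← hη, mul_assoc, hinv, mul_one]
  have key : ∀ ζ σ : Matrix (Fin (n+1)) (Fin (n+1)) ℂ, ζ * a = a * ζ →
      (ζ * (σ + a * σ * a⁻¹)).trace = 2 * (ζ * σ).trace := by
    intro ζ σ hζ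
    have hζ' : a * ζ * a⁻¹ = ζ := by rw [← hζ, mul_assoc, hinv, mul_one]
    have h2 : a⁻¹ * a = 1 := Matrix.nonsing_inv_mul a hdet
    have hre : ζ * (a * σ * a⁻¹) = a * ζ * σ * a⁻¹ := by
      rw [← mul_assoc, ← mul_assoc, hζ]
    have this : (ζ * (a * σ * a⁻¹)).trace = (ζ * σ).trace := by
      rw [hre, Matrix.trace_mul_comm, ← mul_assoc, ← mul_assoc, h2, one_mul]
    rw [mul_add, Matrix.trace_add, this]; ring
  constructor
  · rw [hξ', hη', key ξ ϱ hξ, key η ρ hη, Matrix.trace_mul_comm η ξ]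
    ring
  · rw [hξ', hη', key ξ 0 hξ, key η 0 hη, Matrix.trace_mul_comm η ξ]
    simp
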